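/- arXiv:1106.3981 — 3 statements merged into one kernel-verified Lean document; each statement's English description precedes it below -/
import Mathlib

section
/- Let ℓ ≥ 1 be an integer and assume X_{ℓ-1}⁺ = S (the ℓ-controllability condition). Then the branch group B is solvable if and only if the subgroup X₀ is solvable. -/
open Pointwise

namespace GroupCodes

variable {S : Type*} [Group S]

/-- The subgroups `Xₙ` of the branch group `B ≤ S × S`: `X₀ = {b ∈ B : b⁻ = 1}` and
`X_{n+1} = {b ∈ B : b⁻ ∈ Xₙ⁺}` (here `b⁻ = b.1`, `b⁺ = b.2`, `U⁺ = snd '' U`). -/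
def Xnat (B : Subgroup (S × S)) : ℕ → Subgroup (S × S)
  | 0 => B ⊓ (MonoidHom.fst S S).ker
  | n + 1 => B ⊓ (Subgroup.map (MonoidHom.snd S S) (Xnat B n)).comap (MonoidHom.fst S S)

/-- The subgroups `Yₙ` of the branch group `B ≤ S × S`: `Y₀ = {b ∈ B : b⁺ = 1}` and
`Y_{n+1} = {b ∈ B : b⁺ ∈ Yₙ⁻}`. -/
def Ynat (B : Subgroup (S × S)) : ℕ → Subgroup (S × S)
  | 0 => B ⊓ (MonoidHom.snd S S).ker
  | n + 1 => B ⊓ (Subgroup.map (MonoidHom.fst S S) (Ynat B n)).comap (MonoidHom.snd S S)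

/-- `X i` for an integer index `i`, trivial for `i < 0`. -/
def X (B : Subgroup (S × S)) (i : ℤ) : Subgroup (S × S) :=
  if i < 0 then ⊥ else Xnat B i.toNat

/-- `Y i` for an integer index `i`, trivial for `i < 0`. -/
def Y (B : Subgroup (S × S)) (i : ℤ) : Subgroup (S × S) :=
  if i < 0 then ⊥ else Ynat B i.toNat

/-- The next-branch set `N(U) = {b ∈ B : b⁻ ∈ U⁺}`. -/
def N (B U : Subgroup (S × S)) : Subgroup (S × S) :=
  B ⊓ (Subgroup.map (MonoidHom.snd S S) U).comap (MonoidHom.fst S S)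

/-- The previous-branch set `P(U) = {b ∈ B : b⁺ ∈ U⁻}`. -/
def P (B U : Subgroup (S × S)) : Subgroup (S × S) :=
  B ⊓ (Subgroup.map (MonoidHom.fst S S) U).comap (MonoidHom.snd S S)

/-- `IsQuotIso J H J' H'` says that `J` (viewed inside `H`) is normal in `H`, `J'` is normal
in `H'`, and there is a group isomorphism `H / J ≅ H' / J'`. -/
def IsQuotIso {G₁ G₂ : Type*} [Group G₁] [Group G₂]
    (J H : Subgroup G₁) (J' H' : Subgroup G₂) : Prop :=
  (J.subgroupOf H).Normal ∧ (J'.subgroupOf H').Normal ∧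
    ∀ [(J.subgroupOf H).Normal] [(J'.subgroupOf H').Normal],
      Nonempty ((H ⧸ J.subgroupOf H) ≃* (H' ⧸ J'.subgroupOf H'))

/-- `T` is a right transversal of `J` inside `H`: `T ⊆ H` and `T` meets every right coset
of `J` contained in `H` in exactly one element. -/
def IsRightTransversalIn {G : Type*} [Group G] (J H : Subgroup G) (T : Set G) : Prop :=
  T ⊆ (H : Set G) ∧ ∀ h ∈ H, ∃! t, t ∈ T ∧ t * h⁻¹ ∈ J

/-- The group of trellis path segments `(b₀, …, bₙ)` with `b_j ∈ F j` and matching states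
`b_j⁺ = b_{j+1}⁻`; a subgroup of the direct product `(S × S)^{n+1}`. -/
def chainSubgroup (n : ℕ) (F : ℤ → Subgroup (S × S)) : Subgroup (Fin (n + 1) → S × S) where
  carrier := {b | (∀ i : Fin (n + 1), b i ∈ F (i : ℤ)) ∧
    ∀ i : Fin n, (b i.castSucc).2 = (b i.succ).1}
  one_mem' := ⟨fun _ => one_mem _, fun _ => rfl⟩
  mul_mem' := by
    rintro a b ⟨ha1, ha2⟩ ⟨hb1, hb2⟩
    refine ⟨fun i => mul_mem (ha1 i) (hb1 i), fun i => ?_⟩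
    simp only [Pi.mul_apply, Prod.snd_mul, Prod.fst_mul, ha2 i, hb2 i]
  inv_mem' := by
    rintro a ⟨ha1, ha2⟩
    refine ⟨fun i => inv_mem (ha1 i), fun i => ?_⟩
    simp only [Pi.inv_apply, Prod.snd_inv, Prod.fst_inv, ha2 i]

/-- `U ⨝ N(U)`: the group of trellis path segments `(b, b')` of length two with `b ∈ U`,
`b' ∈ N(U)` and `b⁺ = b'⁻`; a subgroup of the direct product `(S × S) × (S × S)`. -/
def JoinN (B U : Subgroup (S × S)) : Subgroup ((S × S) × (S × S)) where
  carrier := {p | p.1 ∈ U ∧ p.2 ∈ N B U ∧ p.1.2 = p.2.1}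
  one_mem' := ⟨one_mem _, one_mem _, rfl⟩
  mul_mem' := by
    rintro a b ⟨ha1, ha2, ha3⟩ ⟨hb1, hb2, hb3⟩
    exact ⟨mul_mem ha1 hb1, mul_mem ha2 hb2, by
      simp only [Prod.fst_mul, Prod.snd_mul, ha3, hb3]⟩
  inv_mem' := by
    rintro a ⟨ha1, ha2, ha3⟩
    exact ⟨inv_mem ha1, inv_mem ha2, by
      simp only [Prod.fst_inv, Prod.snd_inv, ha3]⟩

/-!
The first projection exhibits `X_{n+1}` as an extension of a subgroup of `X_n⁺` by a subgroup
of `X₀`, so solvability of `X₀` propagates to every `X_n`. Controllability makes `S` a quotient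
of `X_{ℓ-1}`, hence solvable, and then so is `B ≤ S × S`.
-/

theorem _root_.Subgroup.isSolvable_map {G G' : Type*} [Group G] [Group G'] (f : G →* G')
    (H : Subgroup G) [Group.IsSolvable H] : Group.IsSolvable (H.map f) :=
  Group.isSolvable_of_surjective (f.subgroupMap_surjective H)

theorem _root_.Subgroup.isSolvable_of_isSolvable_inf_ker_of_isSolvable_map {G G' : Type*}
    [Group G] [Group G'] (f : G →* G') (H : Subgroup G) [Group.IsSolvable ↥(H ⊓ f.ker)]
    [Group.IsSolvable (H.map f)] : Group.IsSolvable H :=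
  Group.isSolvable_of_ker_le_range (Subgroup.inclusion (inf_le_left : H ⊓ f.ker ≤ H))
    (f.subgroupMap H) fun x hx =>
      ⟨⟨x, x.2, Subtype.ext_iff.mp hx⟩, rfl⟩

theorem X_zero (B : Subgroup (S × S)) : X B 0 = Xnat B 0 := rfl

theorem X_of_nonneg (B : Subgroup (S × S)) {i : ℤ} (hi : 0 ≤ i) : X B i = Xnat B i.toNat :=
  if_neg (not_lt.mpr hi)

theorem X_of_neg (B : Subgroup (S × S)) {i : ℤ} (hi : i < 0) : X B i = ⊥ :=
  if_pos hi

theorem Xnat_succ_inf_ker_fst_le (B : Subgroup (S × S)) (n : ℕ) :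
    Xnat B (n + 1) ⊓ (MonoidHom.fst S S).ker ≤ Xnat B 0 :=
  inf_le_inf_right _ inf_le_left

theorem map_fst_Xnat_succ_le (B : Subgroup (S × S)) (n : ℕ) :
    (Xnat B (n + 1)).map (MonoidHom.fst S S) ≤ (Xnat B n).map (MonoidHom.snd S S) :=
  Subgroup.map_le_iff_le_comap.mpr inf_le_right

theorem isSolvable_Xnat (B : Subgroup (S × S)) [Group.IsSolvable (Xnat B 0)] :
    ∀ n, Group.IsSolvable (Xnat B n)
  | 0 => inferInstance
  | n + 1 =>
    have := isSolvable_Xnat B n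
    have := (Xnat B n).isSolvable_map (MonoidHom.snd S S)
    have : Group.IsSolvable ↥(Xnat B (n + 1) ⊓ (MonoidHom.fst S S).ker) :=
      Group.isSolvable_of_isSolvable_injective
        (Subgroup.inclusion_injective (Xnat_succ_inf_ker_fst_le B n))
    have : Group.IsSolvable ((Xnat B (n + 1)).map (MonoidHom.fst S S)) :=
      Group.isSolvable_of_isSolvable_injective
        (Subgroup.inclusion_injective (map_fst_Xnat_succ_le B n))
    (Xnat B (n + 1)).isSolvable_of_isSolvable_inf_ker_of_isSolvable_map (MonoidHom.fst S S)

theorem isSolvable_X (B : Subgroup (S × S)) (h0 : Group.IsSolvable (X B 0)) (i : ℤ) :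
    Group.IsSolvable (X B i) := by
  rw [X_zero] at h0
  rcases lt_or_ge i 0 with hi | hi
  · rw [X_of_neg B hi]
    infer_instance
  · rw [X_of_nonneg B hi]
    exact isSolvable_Xnat B i.toNat

theorem branch_group_solvable_iff_X0_solvable_general
    (B : Subgroup (S × S))
    (ℓ : ℤ)
    (hctl : Subgroup.map (MonoidHom.snd S S) (X B (ℓ - 1)) = ⊤) :
    IsSolvable ↥B ↔ IsSolvable ↥(X B 0) := by
  refine ⟨fun (_ : Group.IsSolvable B) => ?_, fun h0 => ?_⟩
  · exact Group.isSolvable_of_isSolvable_injective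
      (Subgroup.inclusion_injective (X_zero B ▸ inf_le_left : X B 0 ≤ B))
  have := isSolvable_X B h0 (ℓ - 1)
  have := (X B (ℓ - 1)).isSolvable_map (MonoidHom.snd S S)
  rw [hctl] at this
  have : Group.IsSolvable S :=
    Group.isSolvable_of_surjective (f := (⊤ : Subgroup S).subtype) fun s => ⟨⟨s, trivial⟩, rfl⟩
  exact Group.isSolvable_of_isSolvable_injective B.subtype_injective

/-- if the trellis is `ℓ`-controllable (`X_{ℓ-1}⁺ = S`), then the branch group
`B` is solvable iff `X₀` is solvable. -/
theorem branch_group_solvable_iff_X0_solvable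
    (B : Subgroup (S × S))
    (hB1 : Subgroup.map (MonoidHom.fst S S) B = ⊤)
    (hB2 : Subgroup.map (MonoidHom.snd S S) B = ⊤)
    (ℓ : ℤ) (hℓ : 1 ≤ ℓ)
    (hctl : Subgroup.map (MonoidHom.snd S S) (X B (ℓ - 1)) = ⊤) :
    IsSolvable ↥B ↔ IsSolvable ↥(X B 0) :=
  branch_group_solvable_iff_X0_solvable_general B ℓ hctl

end GroupCodes
end

section
/- Let ℓ ≥ 1 be an integer and assume X_{ℓ-1}⁺ = S (the ℓ-controllability condition), so that X_ℓ = B. For 0 ≤ j ≤ ℓ set X_{j-1}* = X_{j-1}(X_j ∩ Y₀). Then: (a) each X_{j-1}* is a normal subgroup of B; (b) there is a chain of subgroups 1 = X_{-1} ≤ X_{-1}* ≤ X₀ ≤ X₀* ≤ X₁ ≤ X₁* ≤ ⋯ ≤ X_{ℓ-1} ≤ X_{ℓ-1}* = X_ℓ = B; and (c) for every 0 ≤ j < ℓ there is a group isomorphism X_j / X_{j-1}* ≅ X_{j+1} / X_j. -/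
open Pointwise

namespace GroupCodes

variable {S : Type*} [Group S]

/-- `X_j* = X_j (X_{j+1} ∩ Y₀)` (as a subgroup, realized as the join). -/
def Xstar (B : Subgroup (S × S)) (j : ℤ) : Subgroup (S × S) :=
  X B j ⊔ (X B (j + 1) ⊓ Y B 0)


section Aux

variable {S : Type*} [Group S]

lemma Xnat_le_B (B : Subgroup (S × S)) : ∀ n, Xnat B n ≤ B
  | 0 => inf_le_left
  | _ + 1 => inf_le_left

lemma mem_Xnat_zero (B : Subgroup (S × S)) (x : S × S) :
    x ∈ Xnat B 0 ↔ x ∈ B ∧ x.1 = 1 := by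
  show x ∈ B ⊓ (MonoidHom.fst S S).ker ↔ _
  rw [Subgroup.mem_inf, MonoidHom.mem_ker, MonoidHom.coe_fst]

lemma mem_Xnat_succ (B : Subgroup (S × S)) (n : ℕ) (x : S × S) :
    x ∈ Xnat B (n + 1) ↔ x ∈ B ∧ x.1 ∈ Subgroup.map (MonoidHom.snd S S) (Xnat B n) := by
  simp [Xnat, Subgroup.mem_inf, Subgroup.mem_comap]

lemma Xnat_mono (B : Subgroup (S × S)) : ∀ n, Xnat B n ≤ Xnat B (n + 1)
  | 0 => fun x hx => by
      rw [mem_Xnat_zero] at hx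
      rw [mem_Xnat_succ]
      exact ⟨hx.1, hx.2 ▸ ⟨1, one_mem _, rfl⟩⟩
  | n + 1 => fun x hx => by
      rw [mem_Xnat_succ] at hx ⊢
      exact ⟨hx.1, Subgroup.map_mono (Xnat_mono B n) hx.2⟩

lemma X_neg (B : Subgroup (S × S)) {i : ℤ} (h : i < 0) : X B i = ⊥ := if_pos h

lemma X_coe (B : Subgroup (S × S)) (n : ℕ) : X B (n : ℤ) = Xnat B n := by
  rw [X, if_neg (by exact_mod_cast Int.not_lt.mpr (Int.natCast_nonneg n))]
  simp

lemma X_le_B (B : Subgroup (S × S)) (i : ℤ) : X B i ≤ B := by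
  rcases lt_or_ge i 0 with h | h
  · rw [X_neg B h]; exact bot_le
  · obtain ⟨n, rfl⟩ := Int.eq_ofNat_of_zero_le h
    rw [X_coe]; exact Xnat_le_B B n

lemma X_step (B : Subgroup (S × S)) (i : ℤ) : X B i ≤ X B (i + 1) := by
  rcases lt_or_ge i 0 with h | h
  · rw [X_neg B h]; exact bot_le
  · obtain ⟨n, rfl⟩ := Int.eq_ofNat_of_zero_le h
    have : ((n : ℤ) + 1) = ((n + 1 : ℕ) : ℤ) := by push_cast; ring
    rw [this, X_coe, X_coe]
    exact Xnat_mono B n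

lemma mem_X_iff (B : Subgroup (S × S)) {j : ℤ} (hj : 0 ≤ j) (x : S × S) :
    x ∈ X B j ↔ x ∈ B ∧ x.1 ∈ Subgroup.map (MonoidHom.snd S S) (X B (j - 1)) := by
  obtain ⟨n, rfl⟩ := Int.eq_ofNat_of_zero_le hj
  cases n with
  | zero =>
      rw [X_coe, mem_Xnat_zero]
      have : ((0 : ℕ) : ℤ) - 1 = (-1 : ℤ) := by norm_num
      rw [this, X_neg B (by norm_num), Subgroup.map_bot]
      simp
  | succ k =>
      rw [X_coe, mem_Xnat_succ]
      have : ((k + 1 : ℕ) : ℤ) - 1 = (k : ℤ) := by push_cast; ring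
      rw [this, X_coe]

lemma mem_Y_zero (B : Subgroup (S × S)) (x : S × S) :
    x ∈ Y B 0 ↔ x ∈ B ∧ x.2 = 1 := by
  rw [Y, if_neg (by norm_num)]
  show x ∈ B ⊓ (MonoidHom.snd S S).ker ↔ _
  rw [Subgroup.mem_inf, MonoidHom.mem_ker, MonoidHom.coe_snd]

lemma Xnat_conj (B : Subgroup (S × S))
    (hB2 : Subgroup.map (MonoidHom.snd S S) B = ⊤) :
    ∀ n, ∀ b ∈ B, ∀ x ∈ Xnat B n, b * x * b⁻¹ ∈ Xnat B n
  | 0 => fun b hb x hx => by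
      rw [mem_Xnat_zero] at hx ⊢
      refine ⟨mul_mem (mul_mem hb hx.1) (inv_mem hb), ?_⟩
      simp [Prod.fst_mul, Prod.fst_inv, hx.2]
  | n + 1 => fun b hb x hx => by
      rw [mem_Xnat_succ] at hx ⊢
      refine ⟨mul_mem (mul_mem hb hx.1) (inv_mem hb), ?_⟩
      obtain ⟨a, ha, ha2⟩ := hx.2
      have hb1 : b.1 ∈ (⊤ : Subgroup S) := trivial
      rw [← hB2] at hb1
      obtain ⟨b', hb', hb'2⟩ := hb1
      refine ⟨b' * a * b'⁻¹, Xnat_conj B hB2 n b' hb' a ha, ?_⟩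
      simp only [MonoidHom.coe_snd] at ha2 hb'2 ⊢
      simp [Prod.snd_mul, Prod.snd_inv, Prod.fst_mul, Prod.fst_inv, ha2, hb'2]

lemma X_conj (B : Subgroup (S × S))
    (hB2 : Subgroup.map (MonoidHom.snd S S) B = ⊤) (i : ℤ) :
    ∀ b ∈ B, ∀ x ∈ X B i, b * x * b⁻¹ ∈ X B i := by
  rcases lt_or_ge i 0 with h | h
  · intro b hb x hx
    rw [X_neg B h] at hx ⊢
    rw [Subgroup.mem_bot] at hx
    simp [hx]
  · obtain ⟨n, rfl⟩ := Int.eq_ofNat_of_zero_le h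
    rw [X_coe]
    exact Xnat_conj B hB2 n

lemma Y_zero_conj (B : Subgroup (S × S)) :
    ∀ b ∈ B, ∀ x ∈ Y B 0, b * x * b⁻¹ ∈ Y B 0 := by
  intro b hb x hx
  rw [mem_Y_zero] at hx ⊢
  refine ⟨mul_mem (mul_mem hb hx.1) (inv_mem hb), ?_⟩
  simp [Prod.snd_mul, Prod.snd_inv, hx.2]

lemma Xstar_conj (B : Subgroup (S × S))
    (hB2 : Subgroup.map (MonoidHom.snd S S) B = ⊤) (i : ℤ) :
    ∀ b ∈ B, ∀ x ∈ Xstar B i, b * x * b⁻¹ ∈ Xstar B i := by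
  intro b hb x hx
  have key : Subgroup.map (MulAut.conj b).toMonoidHom (Xstar B i) ≤ Xstar B i := by
    rw [Xstar, Subgroup.map_sup]
    apply sup_le
    · refine le_trans ?_ (le_sup_left : X B i ≤ X B i ⊔ (X B (i + 1) ⊓ Y B 0))
      rintro y ⟨a, ha, rfl⟩
      simpa [MulAut.conj_apply] using X_conj B hB2 i b hb a ha
    · refine le_trans ?_ (le_sup_right : _ ≤ X B i ⊔ (X B (i + 1) ⊓ Y B 0))
      rintro y ⟨a, ha, rfl⟩
      have ha' : a ∈ X B (i + 1) ⊓ Y B 0 := ha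
      rw [Subgroup.mem_inf] at ha'
      have ha := ha'
      rw [Subgroup.mem_inf]
      constructor
      · simpa [MulAut.conj_apply] using X_conj B hB2 (i + 1) b hb a ha.1
      · simpa [MulAut.conj_apply] using Y_zero_conj B b hb a ha.2
  have hmem : b * x * b⁻¹ ∈ Subgroup.map (MulAut.conj b).toMonoidHom (Xstar B i) :=
    ⟨x, hx, by simp [MulAut.conj_apply]⟩
  exact key hmem

end Aux

/-- under `ℓ`-controllability, the `X_{j-1}*` are normal in `B`, refine the
chain `{X_j}`, `X_{ℓ-1}* = X_ℓ = B`, and `X_j / X_{j-1}* ≅ X_{j+1} / X_j` for `0 ≤ j < ℓ`. -/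
theorem Xstar_chain_and_quot_iso
    (B : Subgroup (S × S))
    (hB1 : Subgroup.map (MonoidHom.fst S S) B = ⊤)
    (hB2 : Subgroup.map (MonoidHom.snd S S) B = ⊤)
    (ℓ : ℤ) (hℓ : 1 ≤ ℓ)
    (hctl : Subgroup.map (MonoidHom.snd S S) (X B (ℓ - 1)) = ⊤) :
    (∀ j : ℤ, 0 ≤ j → j ≤ ℓ →
      Xstar B (j - 1) ≤ B ∧ ((Xstar B (j - 1)).subgroupOf B).Normal) ∧
    (∀ j : ℤ, 0 ≤ j → j ≤ ℓ →
      X B (j - 1) ≤ Xstar B (j - 1) ∧ Xstar B (j - 1) ≤ X B j) ∧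
    Xstar B (ℓ - 1) = X B ℓ ∧ X B ℓ = B ∧
    (∀ j : ℤ, 0 ≤ j → j < ℓ →
      IsQuotIso (Xstar B (j - 1)) (X B j) (X B j) (X B (j + 1))) := by
  -- basic chain facts
  have hchain : ∀ j : ℤ, X B (j - 1) ≤ Xstar B (j - 1) ∧ Xstar B (j - 1) ≤ X B j := by
    intro j
    constructor
    · exact le_sup_left
    · rw [Xstar, sub_add_cancel]
      exact sup_le (by have := X_step B (j - 1); rwa [sub_add_cancel] at this) inf_le_left
  -- X B ℓ = B
  have hXl : X B ℓ = B := by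
    obtain ⟨n, hn⟩ := Int.eq_ofNat_of_zero_le (by omega : (0 : ℤ) ≤ ℓ - 1)
    have hℓn : ℓ = ((n + 1 : ℕ) : ℤ) := by push_cast; omega
    rw [hn, X_coe] at hctl
    rw [hℓn, X_coe, Xnat, hctl, Subgroup.comap_top, inf_top_eq]
  -- Xstar B (ℓ - 1) = X B ℓ
  have hXstarl : Xstar B (ℓ - 1) = X B ℓ := by
    refine le_antisymm (hchain ℓ).2 ?_
    intro x hx
    have hxB : x ∈ B := by rw [← hXl]; exact hx
    have hx2 : x.2 ∈ (⊤ : Subgroup S) := trivial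
    rw [← hctl] at hx2
    obtain ⟨a, ha, ha2⟩ := hx2
    simp only [MonoidHom.coe_snd] at ha2
    have haB : a ∈ B := X_le_B B _ ha
    have h2 : a⁻¹ * x ∈ X B (ℓ - 1 + 1) ⊓ Y B 0 := by
      rw [sub_add_cancel, Subgroup.mem_inf, hXl, mem_Y_zero]
      exact ⟨mul_mem (inv_mem haB) hxB,
        ⟨mul_mem (inv_mem haB) hxB, by simp [Prod.snd_mul, Prod.snd_inv, ha2]⟩⟩
    have : x = a * (a⁻¹ * x) := by group
    rw [Xstar, this]
    exact mul_mem (Subgroup.mem_sup_left ha) (Subgroup.mem_sup_right h2)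
  refine ⟨?_, fun j _ _ => hchain j, hXstarl, hXl, ?_⟩
  · -- normality of Xstar in B
    intro j _ _
    have hle : Xstar B (j - 1) ≤ B :=
      sup_le (X_le_B B _) (le_trans inf_le_left (X_le_B B _))
    refine ⟨hle, ⟨fun n hn g => ?_⟩⟩
    rw [Subgroup.mem_subgroupOf] at hn ⊢
    simpa using Xstar_conj B hB2 (j - 1) g g.2 n hn
  · -- the quotient isomorphisms
    intro j hj0 hjl
    have hQmem : ∀ x : S × S, x ∈ X B (j + 1) ↔ x ∈ B ∧
        x.1 ∈ Subgroup.map (MonoidHom.snd S S) (X B j) := by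
      intro x
      have := mem_X_iff B (by omega : (0 : ℤ) ≤ j + 1) x
      rwa [add_sub_cancel_right] at this
    set K := Subgroup.map (MonoidHom.snd S S) (X B (j - 1)) with hKdef
    set Q := Subgroup.map (MonoidHom.snd S S) (X B j) with hQdef
    have hKnormal : K.Normal := by
      constructor
      intro n hn g
      have hg : g ∈ (⊤ : Subgroup S) := trivial
      rw [← hB2] at hg
      obtain ⟨b, hb, rfl⟩ := hg
      obtain ⟨a, ha, rfl⟩ := hn
      refine ⟨b * a * b⁻¹, X_conj B hB2 _ b hb a ha, ?_⟩
      simp [Prod.snd_mul, Prod.snd_inv]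
    have hK'normal : (K.subgroupOf Q).Normal := hKnormal.comap Q.subtype
    -- the homomorphism φ : X_j → Q ⧸ K
    let φ : (X B j) →* Q ⧸ K.subgroupOf Q :=
      (QuotientGroup.mk' (K.subgroupOf Q)).comp ((MonoidHom.snd S S).subgroupMap (X B j))
    have hφsurj : Function.Surjective φ :=
      (QuotientGroup.mk'_surjective _).comp
        ((MonoidHom.snd S S).subgroupMap_surjective (X B j))
    have hkerφ : φ.ker = (Xstar B (j - 1)).subgroupOf (X B j) := by
      ext x
      rw [MonoidHom.mem_ker, Subgroup.mem_subgroupOf]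
      show (QuotientGroup.mk' (K.subgroupOf Q)) _ = 1 ↔ _
      rw [QuotientGroup.mk'_apply, QuotientGroup.eq_one_iff, Subgroup.mem_subgroupOf]
      show (x : S × S).2 ∈ K ↔ _
      constructor
      · rintro ⟨a, ha, ha2⟩
        simp only [MonoidHom.coe_snd] at ha2
        have haB : a ∈ B := X_le_B B _ ha
        have hxB : (x : S × S) ∈ B := X_le_B B _ x.2
        have hstep' : X B (j - 1) ≤ X B j := by
          have := X_step B (j - 1); rwa [sub_add_cancel] at this
        have h2 : a⁻¹ * (x : S × S) ∈ X B (j - 1 + 1) ⊓ Y B 0 := by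
          rw [sub_add_cancel, Subgroup.mem_inf, mem_Y_zero]
          refine ⟨mul_mem (inv_mem (hstep' ha)) x.2,
            ⟨mul_mem (inv_mem haB) hxB, by simp [Prod.snd_mul, Prod.snd_inv, ha2]⟩⟩
        have hx : (x : S × S) = a * (a⁻¹ * (x : S × S)) := by group
        rw [Xstar, hx]
        exact mul_mem (Subgroup.mem_sup_left ha) (Subgroup.mem_sup_right h2)
      · intro hx
        have hle : Xstar B (j - 1) ≤ K.comap (MonoidHom.snd S S) := by
          rw [Xstar]
          apply sup_le
          · intro a ha
            exact Subgroup.mem_comap.2 ⟨a, ha, rfl⟩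
          · intro a ha
            rw [Subgroup.mem_inf, mem_Y_zero] at ha
            exact Subgroup.mem_comap.2 (by
              show a.2 ∈ K
              rw [ha.2.2]
              exact one_mem K)
        exact hle hx
    -- the homomorphism ψ : X_{j+1} → Q ⧸ K
    let ψ₀ : (X B (j + 1)) →* Q :=
      ((MonoidHom.fst S S).comp (X B (j + 1)).subtype).codRestrict Q
        (fun x => ((hQmem x.val).1 x.2).2)
    let ψ : (X B (j + 1)) →* Q ⧸ K.subgroupOf Q :=
      (QuotientGroup.mk' (K.subgroupOf Q)).comp ψ₀
    have hψ₀surj : Function.Surjective ψ₀ := by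
      rintro ⟨q, hq⟩
      have hq' : q ∈ (⊤ : Subgroup S) := trivial
      rw [← hB1] at hq'
      obtain ⟨b, hb, rfl⟩ := hq'
      have hbX : b ∈ X B (j + 1) := (hQmem b).2 ⟨hb, hq⟩
      exact ⟨⟨b, hbX⟩, rfl⟩
    have hψsurj : Function.Surjective ψ :=
      (QuotientGroup.mk'_surjective _).comp hψ₀surj
    have hkerψ : ψ.ker = (X B j).subgroupOf (X B (j + 1)) := by
      ext x
      rw [MonoidHom.mem_ker, Subgroup.mem_subgroupOf]
      show (QuotientGroup.mk' (K.subgroupOf Q)) _ = 1 ↔ _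
      rw [QuotientGroup.mk'_apply, QuotientGroup.eq_one_iff, Subgroup.mem_subgroupOf]
      show (x : S × S).1 ∈ K ↔ _
      rw [mem_X_iff B hj0]
      have hxB : (x : S × S) ∈ B := X_le_B B _ x.2
      tauto
    have hN1 : ((Xstar B (j - 1)).subgroupOf (X B j)).Normal := hkerφ ▸ φ.normal_ker
    have hN2 : ((X B j).subgroupOf (X B (j + 1))).Normal := hkerψ ▸ ψ.normal_ker
    refine ⟨hN1, hN2, ?_⟩
    intro i1 i2
    exact ⟨((QuotientGroup.quotientMulEquivOfEq hkerφ.symm).trans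
      (QuotientGroup.quotientKerEquivOfSurjective φ hφsurj)).trans
      (((QuotientGroup.quotientMulEquivOfEq hkerψ.symm).trans
        (QuotientGroup.quotientKerEquivOfSurjective ψ hψsurj)).symm)⟩


end GroupCodes
end

section
/- Fix an integer j ≥ 0 and let J and H be subgroups of X_j such that X_j ∩ Y₀ ≤ J and J is a normal subgroup of H. Then N(J) is a normal subgroup of N(H) and there is a group isomorphism H / J ≅ N(H) / N(J). -/
open Pointwise

namespace GroupCodes

variable {S : Type*} [Group S]

/-!
Both quotients are isomorphic to `H⁺ / J⁺`. Since `H ≤ X_j` and `X_j ∩ Y₀ ≤ J`, every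
`h ∈ H` with `h⁺ = 1` lies in `J`, so `J` is the full preimage of `J⁺` under `h ↦ h⁺`
and `H / J ≅ H⁺ / J⁺`. On the other side `b ↦ b⁻` maps `N(H)` onto `H⁺` (the first
projection of `B` is onto), and `N(J)` is by definition the preimage of `J⁺`, so
`N(H) / N(J) ≅ H⁺ / J⁺` as well.
-/

section QuotientComap

variable {G G' : Type*} [Group G] [Group G']

noncomputable def quotientComapEquivOfSurjective (φ : G →* G') (hφ : Function.Surjective φ)
    (K : Subgroup G') [K.Normal] : G ⧸ K.comap φ ≃* G' ⧸ K :=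
  QuotientGroup.liftEquiv (K.comap φ) (φ := (QuotientGroup.mk' K).comp φ)
    ((QuotientGroup.mk'_surjective K).comp hφ)
    (by rw [← MonoidHom.comap_ker, QuotientGroup.ker_mk'])

theorem subgroupOf_eq_comap_subgroupMap (f : G →* G') {J H : Subgroup G} (hJH : J ≤ H)
    (hker : H ⊓ f.ker ≤ J) :
    J.subgroupOf H = ((J.map f).subgroupOf (H.map f)).comap (f.subgroupMap H) := by
  ext ⟨h, hh⟩
  simp only [Subgroup.mem_subgroupOf, Subgroup.mem_comap, MonoidHom.subgroupMap_apply_coe,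
    Subgroup.mem_map]
  refine ⟨fun hJ => ⟨h, hJ, rfl⟩, ?_⟩
  rintro ⟨g, hg, hfg⟩
  have hker' : g⁻¹ * h ∈ H ⊓ f.ker := Subgroup.mem_inf.2
    ⟨mul_mem (inv_mem (hJH hg)) hh, show f (g⁻¹ * h) = 1 by rw [map_mul, map_inv, hfg,
      inv_mul_cancel]⟩
  simpa using mul_mem hg (hker hker')

end QuotientComap

section NextBranch

variable (B : Subgroup (S × S))

theorem X_le (j : ℤ) : X B j ≤ B := by
  unfold X
  split_ifs
  · exact bot_le
  · cases j.toNat <;> exact inf_le_left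

theorem inf_ker_snd_le_X_inf_Y_zero {j : ℤ} {H : Subgroup (S × S)} (hHX : H ≤ X B j) :
    H ⊓ (MonoidHom.snd S S).ker ≤ X B j ⊓ Y B 0 := fun _ ⟨hH, hsnd⟩ =>
  ⟨hHX hH, by simpa [Y, Ynat] using And.intro (X_le B j (hHX hH)) hsnd⟩

def nextBranchFst (H : Subgroup (S × S)) : N B H →* H.map (MonoidHom.snd S S) :=
  ((MonoidHom.fst S S).comp (N B H).subtype).codRestrict _ fun b => b.2.2

theorem nextBranchFst_surjective (hB : Subgroup.map (MonoidHom.fst S S) B = ⊤)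
    (H : Subgroup (S × S)) : Function.Surjective (nextBranchFst B H) := by
  rintro ⟨s, hs⟩
  obtain ⟨b, hb, rfl⟩ : s ∈ B.map (MonoidHom.fst S S) := hB ▸ Subgroup.mem_top s
  exact ⟨⟨b, hb, hs⟩, rfl⟩

theorem N_subgroupOf_eq_comap_nextBranchFst (J H : Subgroup (S × S)) :
    (N B J).subgroupOf (N B H) =
      ((J.map (MonoidHom.snd S S)).subgroupOf (H.map (MonoidHom.snd S S))).comap
        (nextBranchFst B H) := by
  ext ⟨b, hbB, -⟩
  exact ⟨fun hb => hb.2, fun hb => ⟨hbB, hb⟩⟩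

end NextBranch

theorem quot_iso_next_branch_general
    (B : Subgroup (S × S))
    (hB1 : Subgroup.map (MonoidHom.fst S S) B = ⊤)
    (j : ℤ)
    (J H : Subgroup (S × S))
    (hHX : H ≤ X B j)
    (hY0 : X B j ⊓ Y B 0 ≤ J)
    (hJH : J ≤ H) (hn : (J.subgroupOf H).Normal) :
    IsQuotIso J H (N B J) (N B H) := by
  set K := (J.map (MonoidHom.snd S S)).subgroupOf (H.map (MonoidHom.snd S S))
  have hsnd := (MonoidHom.snd S S).subgroupMap_surjective H
  have hfst := nextBranchFst_surjective B hB1 H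
  have hJK : J.subgroupOf H = K.comap ((MonoidHom.snd S S).subgroupMap H) :=
    subgroupOf_eq_comap_subgroupMap _ hJH ((inf_ker_snd_le_X_inf_Y_zero B hHX).trans hY0)
  have hNK := N_subgroupOf_eq_comap_nextBranchFst B J H
  have hK : K.Normal := (Subgroup.normal_comap_iff_of_surjective hsnd).1 (hJK ▸ hn)
  refine ⟨hn, hNK ▸ hK.comap _, ⟨?_⟩⟩
  exact (QuotientGroup.quotientMulEquivOfEq hJK).trans <|
    (quotientComapEquivOfSurjective _ hsnd K).trans <|
      (quotientComapEquivOfSurjective _ hfst K).symm.trans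
        (QuotientGroup.quotientMulEquivOfEq hNK.symm)

/-- if `X_j ∩ Y₀ ≤ J` and `J ⊴ H ≤ X_j`, then `N(J) ⊴ N(H)` and
`H / J ≅ N(H) / N(J)`. -/
theorem quot_iso_next_branch
    (B : Subgroup (S × S))
    (hB1 : Subgroup.map (MonoidHom.fst S S) B = ⊤)
    (hB2 : Subgroup.map (MonoidHom.snd S S) B = ⊤)
    (j : ℤ) (hj : 0 ≤ j)
    (J H : Subgroup (S × S))
    (hJX : J ≤ X B j) (hHX : H ≤ X B j)
    (hY0 : X B j ⊓ Y B 0 ≤ J)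
    (hJH : J ≤ H) (hn : (J.subgroupOf H).Normal) :
    IsQuotIso J H (N B J) (N B H) :=
  quot_iso_next_branch_general B hB1 j J H hHX hY0 hJH hn

end GroupCodes
end
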